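/- arXiv:math/0612468 — 2 statements merged into one kernel-verified Lean document; each statement's English description precedes it below -/
import Mathlib

section
/- Let x ∈ P and u' ∈ P' with u ∉ x^⊥ (i.e. the edges x and u are distinct and not disjoint). Then d(x, u') = 3 in 𝕊. -/
/- Common setup: the generalized quadrangle of order (2,2) on the edges of a
   6-element set, the near hexagon 𝓢 = ℍ₃, and the near hexagon 𝕊 = DSp(6,2). -/

/-- An edge: a 2-element subset of `Fin 6`. -/
abbrev Edge : Type := {e : Finset (Fin 6) // e.card = 2}

/-- `perp A` is `A^⊥`: the set of edges equal to or disjoint from every element of `A`. -/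
def perp (A : Set Edge) : Set Edge := {y | ∀ x ∈ A, x = y ∨ Disjoint x.1 y.1}

/-- A factor: a set of three pairwise disjoint edges (a perfect matching of `Fin 6`). -/
def IsFactor (T : Set Edge) : Prop :=
  T.ncard = 3 ∧ T.Pairwise (fun x y => Disjoint x.1 y.1)

/-- A triad: a set of three pairwise non-collinear (i.e. pairwise intersecting) distinct
    edges. -/
def IsTriad (T : Set Edge) : Prop :=
  T.ncard = 3 ∧ T.Pairwise (fun x y => ¬ Disjoint x.1 y.1)

/-- A complete triad: a triad not contained in a set of four pairwise non-collinear edges. -/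
def IsCompleteTriad (T : Set Edge) : Prop :=
  IsTriad T ∧
    ¬ ∃ U : Set Edge, T ⊆ U ∧ U.ncard = 4 ∧ U.Pairwise (fun x y => ¬ Disjoint x.1 y.1)

/-- The point set 𝓟 of 𝓢 : pairs `(x,u)` of edges with `x = u` or `x ∩ u = ∅`. -/
def NPoint : Type := {p : Edge × Edge // p.1 = p.2 ∨ Disjoint p.1.1 p.2.1}

/-- The lines 𝓛 of 𝓢 : sets `{(x, σ x) : x ∈ T}` where `T` is a factor or a complete
    triad and `σ : T → T^⊥` is a bijection. -/
def IsLine (L : Set NPoint) : Prop :=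
  ∃ (T : Set Edge) (σ : Edge → Edge),
    (IsFactor T ∨ IsCompleteTriad T) ∧ Set.BijOn σ T (perp T) ∧
    L = {p : NPoint | p.1.1 ∈ T ∧ p.1.2 = σ p.1.1}

/-- The collinearity graph of 𝓢. -/
def NG : SimpleGraph NPoint where
  Adj α β := α ≠ β ∧ ∃ L, IsLine L ∧ α ∈ L ∧ β ∈ L
  symm := ⟨fun _ _ ⟨h, L, hL, ha, hb⟩ => ⟨h.symm, L, hL, hb, ha⟩⟩
  loopless := ⟨fun _ h => h.1 rfl⟩

/-- The point set ℙ of 𝕊 : the disjoint union 𝓟 ⊔ P ⊔ P' where `P` and `P'` are two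
    copies of the edge set. -/
def BPoint : Type := NPoint ⊕ Edge ⊕ Edge

/-- Embedding of 𝓟 into ℙ. -/
def inS (p : NPoint) : BPoint := Sum.inl p

/-- Embedding of the first copy `P` of the edge set into ℙ (an edge `x` gives `x ∈ P`). -/
def inP (x : Edge) : BPoint := Sum.inr (Sum.inl x)

/-- Embedding of the second copy `P'` of the edge set into ℙ (an edge `u` gives `u' ∈ P'`). -/
def inP' (u : Edge) : BPoint := Sum.inr (Sum.inr u)

/-- The lines 𝕃 of 𝕊 : the lines of 𝓛 together with the lines `{x, (x,u), u'}`
    for `(x,u) ∈ 𝓟` (the latter being the lines of type `𝕃₁`). -/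
def IsBLine (L : Set BPoint) : Prop :=
  (∃ L₀ : Set NPoint, IsLine L₀ ∧ L = inS '' L₀) ∨
  (∃ p : NPoint, L = {inP p.1.1, inS p, inP' p.1.2})

/-- The collinearity graph of 𝕊. -/
def BG : SimpleGraph BPoint where
  Adj α β := α ≠ β ∧ ∃ L, IsBLine L ∧ α ∈ L ∧ β ∈ L
  symm := ⟨fun _ _ ⟨h, L, hL, ha, hb⟩ => ⟨h.symm, L, hL, hb, ha⟩⟩
  loopless := ⟨fun _ h => h.1 rfl⟩


/-! The only lines of 𝕊 through a point `x ∈ P` or `u' ∈ P'` are the lines `{x, (x,v), v'}`.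
Hence `x` and `u'` are collinear iff `(x,u) ∈ 𝓟`, i.e. `u ∈ x^⊥`, and the only candidate for a
common neighbour is `(x,u)` itself; so for `u ∉ x^⊥` the distance is at least `3`. Conversely
`x, x', y, u'` is a path for any edge `y` disjoint from `x ∪ u`, which exists since `|x ∪ u| ≤ 4`. -/

lemma SimpleGraph.dist_eq_three_of_walk {V : Type*} {G : SimpleGraph V} {u v : V}
    (p : G.Walk u v) (hp : p.length = 3) (hne : u ≠ v) (hadj : ¬ G.Adj u v)
    (hcommon : G.commonNeighbors u v = ∅) : G.dist u v = 3 := by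
  have hlt : 2 < G.edist u v := two_lt_edist_iff.mpr ⟨hne, hadj, hcommon⟩
  have hle : G.edist u v ≤ 3 := by simpa [hp] using G.edist_le p
  rw [← p.reachable.coe_dist_eq_edist] at hlt hle
  norm_cast at hlt hle
  omega

@[simp]
lemma mem_perp_singleton {x u : Edge} : u ∈ perp {x} ↔ x = u ∨ Disjoint x.1 u.1 := by
  simp [perp]

lemma exists_edge_disjoint_disjoint (x u : Edge) :
    ∃ y : Edge, Disjoint x.1 y.1 ∧ Disjoint u.1 y.1 := by
  have hcard : 2 ≤ (x.1 ∪ u.1)ᶜ.card := by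
    have := Finset.card_union_le x.1 u.1
    rw [Finset.card_compl, Fintype.card_fin]
    omega
  obtain ⟨y, hy, hy2⟩ := Finset.exists_subset_card_eq hcard
  have hdisj : Disjoint (x.1 ∪ u.1) y := Finset.subset_compl_iff_disjoint_left.mp hy
  exact ⟨⟨y, hy2⟩, hdisj.mono_left Finset.subset_union_left,
    hdisj.mono_left Finset.subset_union_right⟩

lemma IsBLine.exists_eq_of_inP_mem {L : Set BPoint} (hL : IsBLine L) {x : Edge}
    (hx : inP x ∈ L) : ∃ p : NPoint, p.1.1 = x ∧ L = {inP x, inS p, inP' p.1.2} := by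
  rcases hL with ⟨L₀, -, rfl⟩ | ⟨p, rfl⟩
  · obtain ⟨q, -, hq⟩ := hx
    simp [BPoint, inS, inP] at hq
  · have hpx : p.1.1 = x := by unfold BPoint at hx; simpa [inP, inS, inP', eq_comm] using hx
    exact ⟨p, hpx, hpx ▸ rfl⟩

lemma IsBLine.exists_eq_of_inP'_mem {L : Set BPoint} (hL : IsBLine L) {u : Edge}
    (hu : inP' u ∈ L) : ∃ p : NPoint, p.1.2 = u ∧ L = {inP p.1.1, inS p, inP' u} := by
  rcases hL with ⟨L₀, -, rfl⟩ | ⟨p, rfl⟩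
  · obtain ⟨q, -, hq⟩ := hu
    simp [BPoint, inS, inP'] at hq
  · have hpu : p.1.2 = u := by unfold BPoint at hu; simpa [inP, inS, inP', eq_comm] using hu
    exact ⟨p, hpu, hpu ▸ rfl⟩

lemma adj_inP_iff {x : Edge} {z : BPoint} :
    BG.Adj (inP x) z ↔ ∃ p : NPoint, p.1.1 = x ∧ (z = inS p ∨ z = inP' p.1.2) := by
  constructor
  · rintro ⟨hne, L, hL, hx, hz⟩
    obtain ⟨p, hpx, rfl⟩ := hL.exists_eq_of_inP_mem hx
    rcases hz with rfl | hz | hz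
    · exact absurd rfl hne
    all_goals exact ⟨p, hpx, by tauto⟩
  · rintro ⟨p, rfl, hz⟩
    refine ⟨?_, _, Or.inr ⟨p, rfl⟩, by simp, by rcases hz with rfl | rfl <;> simp⟩
    rcases hz with rfl | rfl <;> simp [BPoint, inP, inS, inP']

lemma adj_inP'_iff {u : Edge} {z : BPoint} :
    BG.Adj z (inP' u) ↔ ∃ p : NPoint, p.1.2 = u ∧ (z = inP p.1.1 ∨ z = inS p) := by
  constructor
  · rintro ⟨hne, L, hL, hz, hu⟩
    obtain ⟨p, hpu, rfl⟩ := hL.exists_eq_of_inP'_mem hu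
    rcases hz with hz | hz | rfl
    · exact ⟨p, hpu, by tauto⟩
    · exact ⟨p, hpu, by tauto⟩
    · exact absurd rfl hne
  · rintro ⟨p, rfl, hz⟩
    refine ⟨?_, _, Or.inr ⟨p, rfl⟩, by rcases hz with rfl | rfl <;> simp, by simp⟩
    rcases hz with rfl | rfl <;> simp [BPoint, inP, inS, inP']

lemma adj_inP_inP'_iff {x u : Edge} : BG.Adj (inP x) (inP' u) ↔ u ∈ perp {x} := by
  rw [adj_inP_iff, mem_perp_singleton]
  simp only [BPoint, inP', inS, reduceCtorEq, Sum.inr.injEq, false_or]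
  constructor
  · rintro ⟨p, rfl, rfl⟩
    exact p.2
  · exact fun h => ⟨⟨(x, u), h⟩, rfl, rfl⟩

lemma commonNeighbors_inP_inP'_eq_empty {x u : Edge} (h : u ∉ perp {x}) :
    BG.commonNeighbors (inP x) (inP' u) = ∅ := by
  refine Set.eq_empty_of_forall_notMem fun z hz => h ?_
  obtain ⟨p, rfl, hzp⟩ := adj_inP_iff.mp hz.1
  obtain ⟨q, rfl, hzq⟩ := adj_inP'_iff.mp hz.2.symm
  rcases hzp with rfl | rfl <;> rcases hzq with hq | hq <;>
    simp only [BPoint, inS, inP, inP', reduceCtorEq, Sum.inl.injEq, Sum.inr.injEq] at hq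
  exact hq ▸ mem_perp_singleton.mpr p.2

lemma exists_walk_inP_inP'_length_eq_three (x u : Edge) :
    ∃ p : BG.Walk (inP x) (inP' u), p.length = 3 := by
  obtain ⟨y, hxy, huy⟩ := exists_edge_disjoint_disjoint x u
  have hxx' : BG.Adj (inP x) (inP' x) := adj_inP_inP'_iff.mpr (by simp)
  have hx'y : BG.Adj (inP' x) (inP y) := (adj_inP_inP'_iff.mpr (by simp [hxy.symm])).symm
  have hyu' : BG.Adj (inP y) (inP' u) := adj_inP_inP'_iff.mpr (by simp [huy.symm])
  exact ⟨.cons hxx' (.cons hx'y (.cons hyu' .nil)), rfl⟩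

/-- If `x ∈ P` and `u' ∈ P'` with `u ∉ x^⊥` (the edges `x` and `u` are
distinct and not disjoint), then `d(x,u') = 3` in 𝕊. -/
theorem statement11 (x u : Edge) (h : u ∉ perp {x}) :
    BG.dist (inP x) (inP' u) = 3 := by
  obtain ⟨p, hp⟩ := exists_walk_inP_inP'_length_eq_three x u
  refine SimpleGraph.dist_eq_three_of_walk p hp ?_ (mt adj_inP_inP'_iff.mp h)
    (commonNeighbors_inP_inP'_eq_empty h)
  simp [BPoint, inP, inP']
end

section
/- Let β = (y,v) ∈ 𝓟. (a) If x ∈ P with x ≠ y and v ∈ x^⊥, then |{x, β}^⊥| ≥ 3 in 𝕊. (b) If u' ∈ P' with u ≠ v and u ∈ y^⊥, then |{u', β}^⊥| ≥ 3 in 𝕊. -/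
/-!
For distinct edges `x, y`, both `{x,y}^⊥` and `{x,y}^⊥⊥` are factors or complete triads (a finite
check on the fifteen edges), and `T^⊥ = {x,y}^⊥` for `T = {x,y}^⊥⊥`. Since any bijection between
such a `T` and `T^⊥` defines a line of `𝓢`, two points `(a,c)`, `(b,d)` with `a ≠ b` in `T` and
`c ≠ d` in `T^⊥` are collinear.

(a) With `T = {x,y}^⊥⊥` and `f, g` the two elements of `T^⊥ = {x,y}^⊥` other than `v`, the points
`v'`, `(x,f)`, `(x,g)` are collinear with both `x` and `β`.
(b) With `T = {u,v}^⊥ ∋ y` and `t₁, t₂` its two elements other than `y`, the points `y`, `(t₁,u)`,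
`(t₂,u)` are collinear with both `u'` and `β`.
-/

open Set Function

theorem Set.insert_insert_sdiff_pair {α : Type*} {s : Set α} {a b : α} (ha : a ∈ s)
    (hb : b ∈ s) : insert a (insert b (s \ {a, b})) = s := by
  ext x
  by_cases hxa : x = a <;> by_cases hxb : x = b <;> simp_all

theorem Set.Finite.exists_bijOn_apply_eq_apply_eq {α β : Type*} [DecidableEq α] {s : Set α}
    {t : Set β} (hs : s.Finite) (ht : t.Finite) (hst : s.ncard = t.ncard) {a b : α} {c d : β}
    (ha : a ∈ s) (hb : b ∈ s) (hab : a ≠ b) (hc : c ∈ t) (hd : d ∈ t) (hcd : c ≠ d) :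
    ∃ σ : α → β, BijOn σ s t ∧ σ a = c ∧ σ b = d := by
  have hrest : (s \ {a, b}).encard = (t \ {c, d}).encard := by
    rw [← hs.sdiff.cast_ncard_eq, ← ht.sdiff.cast_ncard_eq, ncard_sdiff (pair_subset ha hb),
      ncard_sdiff (pair_subset hc hd), ncard_pair hab, ncard_pair hcd, hst]
  have : Nonempty β := ⟨c⟩
  obtain ⟨σ₀, hσ₀⟩ := hs.sdiff.exists_bijOn_of_encard_eq hrest
  set σ := update (update σ₀ b d) a c
  have hσa : σ a = c := by simp [σ]
  have hσb : σ b = d := by simp [σ, hab.symm]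
  have hσ : BijOn σ (s \ {a, b}) (t \ {c, d}) := hσ₀.congr fun x hx => by
    simp only [mem_sdiff, mem_insert_iff, mem_singleton_iff, not_or] at hx
    simp [σ, hx.2.1, hx.2.2]
  refine ⟨σ, ?_, hσa, hσb⟩
  have := (hσ.insert (a := b) (by simp [hσb])).insert (a := a) (by simp [hσa, hσb, hcd])
  rwa [hσa, hσb, insert_insert_sdiff_pair ha hb, insert_insert_sdiff_pair hc hd] at this

theorem Set.exists_ne_ne_of_ncard_eq_three {α : Type*} {s : Set α} (hs : s.ncard = 3) {a : α}
    (ha : a ∈ s) : ∃ b c, b ∈ s ∧ c ∈ s ∧ b ≠ a ∧ c ≠ a ∧ b ≠ c := by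
  obtain ⟨b, c, hbc, hsa⟩ := ncard_eq_two.1 (by rw [ncard_sdiff_singleton_of_mem ha, hs])
  have hb : b ∈ s \ {a} := by simp [hsa]
  have hc : c ∈ s \ {a} := by simp [hsa]
  exact ⟨b, c, hb.1, hc.1, hb.2, hc.2, hbc⟩

theorem Set.ncard_eq_card_filter {α : Type*} [Fintype α] (s : Set α) [DecidablePred (· ∈ s)] :
    s.ncard = (Finset.univ.filter (· ∈ s)).card := by
  rw [← ncard_coe_finset]
  congr
  ext
  simp

theorem subset_perp_perp (A : Set Edge) : A ⊆ perp (perp A) :=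
  fun a ha _ hy => (hy a ha).imp Eq.symm fun h => h.symm

theorem perp_anti {A B : Set Edge} (h : A ⊆ B) : perp B ⊆ perp A :=
  fun _ hy x hx => hy x (h hx)

theorem perp_perp_perp (A : Set Edge) : perp (perp (perp A)) = perp A :=
  (perp_anti (subset_perp_perp A)).antisymm (subset_perp_perp (perp A))

theorem mem_perp_insert {a y : Edge} {s : Set Edge} :
    y ∈ perp (insert a s) ↔ (a = y ∨ Disjoint a.1 y.1) ∧ y ∈ perp s := by
  simp [perp]

theorem mem_perp_singleton_s12 {a y : Edge} : y ∈ perp {a} ↔ a = y ∨ Disjoint a.1 y.1 := by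
  simp [perp]

theorem mem_perp_singleton_comm {a y : Edge} : y ∈ perp {a} ↔ a ∈ perp {y} := by
  simp only [mem_perp_singleton_s12, eq_comm, disjoint_comm]

theorem isCompleteTriad_iff (T : Set Edge) :
    IsCompleteTriad T ↔ IsTriad T ∧ ∀ w : Edge, (∀ t ∈ T, ¬Disjoint t.1 w.1) → w ∈ T := by
  refine ⟨fun ⟨hT, hmax⟩ => ⟨hT, fun w hw => ?_⟩, fun ⟨hT, hmax⟩ => ⟨hT, ?_⟩⟩
  · by_contra hwT
    refine hmax ⟨insert w T, subset_insert w T, ?_, hT.2.insert_of_notMem hwT fun t ht => ?_⟩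
    · rw [ncard_insert_of_notMem hwT (toFinite T), hT.1]
    · exact ⟨fun h => hw t ht h.symm, hw t ht⟩
  · rintro ⟨U, hTU, hU, hUp⟩
    have hTU' : T.ncard < U.ncard := by rw [hT.1, hU]; norm_num
    obtain ⟨w, hwU, hwT⟩ := exists_mem_notMem_of_ncard_lt_ncard hTU'
    exact hwT (hmax w fun t ht => hUp (hTU ht) hwU fun h => hwT (h ▸ ht))

theorem ncard_eq_three_of_isFactor_or_isCompleteTriad {T : Set Edge}
    (hT : IsFactor T ∨ IsCompleteTriad T) : T.ncard = 3 :=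
  hT.elim (·.1) (·.1.1)

instance {α : Type*} [Fintype α] [DecidableEq α] (s : Set α) [DecidablePred (· ∈ s)]
    (r : α → α → Prop) [DecidableRel r] : Decidable (s.Pairwise r) :=
  inferInstanceAs (Decidable (∀ x ∈ s, ∀ y ∈ s, x ≠ y → r x y))

instance (A : Set Edge) [DecidablePred (· ∈ A)] : DecidablePred (· ∈ perp A) :=
  fun y => inferInstanceAs (Decidable (∀ x ∈ A, x = y ∨ Disjoint x.1 y.1))

-- Declared later than the general instance, hence tried first; it avoids enumerating all edges.
instance (a : Edge) (s : Set Edge) [DecidablePred (· ∈ perp s)] :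
    DecidablePred (· ∈ perp (insert a s)) :=
  fun _ => decidable_of_iff _ mem_perp_insert.symm

instance (a : Edge) : DecidablePred (· ∈ perp {a}) :=
  fun _ => decidable_of_iff _ mem_perp_singleton_s12.symm

instance (T : Set Edge) [DecidablePred (· ∈ T)] : Decidable (IsFactor T) :=
  decidable_of_iff ((Finset.univ.filter (· ∈ T)).card = 3 ∧ T.Pairwise (Disjoint ·.1 ·.1))
    (by rw [IsFactor, ncard_eq_card_filter])

instance (T : Set Edge) [DecidablePred (· ∈ T)] : Decidable (IsTriad T) :=
  decidable_of_iff ((Finset.univ.filter (· ∈ T)).card = 3 ∧ T.Pairwise (¬Disjoint ·.1 ·.1))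
    (by rw [IsTriad, ncard_eq_card_filter])

instance (T : Set Edge) [DecidablePred (· ∈ T)] : Decidable (IsCompleteTriad T) :=
  decidable_of_iff _ (isCompleteTriad_iff T).symm

set_option synthInstance.maxSize 1000 in
theorem isFactor_or_isCompleteTriad_perp_pair {x y : Edge} (hxy : x ≠ y) :
    IsFactor (perp {x, y}) ∨ IsCompleteTriad (perp {x, y}) := by
  revert x y
  decide +kernel

set_option synthInstance.maxSize 1000 in
theorem isFactor_or_isCompleteTriad_perp_perp_pair {x y : Edge} (hxy : x ≠ y) :
    IsFactor (perp (perp {x, y})) ∨ IsCompleteTriad (perp (perp {x, y})) := by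
  revert x y
  decide +kernel

instance : Finite NPoint := inferInstanceAs (Finite (Subtype _))

instance : Finite BPoint := inferInstanceAs (Finite (NPoint ⊕ Edge ⊕ Edge))

theorem inS_injective : Injective inS := Sum.inl_injective

theorem adj_inP_inS (p : NPoint) : BG.Adj (inP p.1.1) (inS p) :=
  ⟨nofun, _, Or.inr ⟨p, rfl⟩, by simp, by simp⟩

theorem adj_inP'_inS (p : NPoint) : BG.Adj (inP' p.1.2) (inS p) :=
  ⟨nofun, _, Or.inr ⟨p, rfl⟩, by simp, by simp⟩

theorem adj_inP_inP' (p : NPoint) : BG.Adj (inP p.1.1) (inP' p.1.2) :=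
  ⟨nofun, _, Or.inr ⟨p, rfl⟩, by simp, by simp⟩

theorem adj_inS_inS {T : Set Edge} (hT : IsFactor T ∨ IsCompleteTriad T)
    (hperp : (perp T).ncard = 3) {p q : NPoint} (hp₁ : p.1.1 ∈ T) (hq₁ : q.1.1 ∈ T)
    (hp₂ : p.1.2 ∈ perp T) (hq₂ : q.1.2 ∈ perp T) (h₁ : p.1.1 ≠ q.1.1) (h₂ : p.1.2 ≠ q.1.2) :
    BG.Adj (inS p) (inS q) := by
  obtain ⟨σ, hσ, hσp, hσq⟩ := (toFinite T).exists_bijOn_apply_eq_apply_eq (toFinite _)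
    (by rw [ncard_eq_three_of_isFactor_or_isCompleteTriad hT, hperp]) hp₁ hq₁ h₁ hp₂ hq₂ h₂
  refine ⟨inS_injective.ne fun h => h₁ (congrArg (·.1.1) h),
    inS '' {r | r.1.1 ∈ T ∧ r.1.2 = σ r.1.1}, Or.inl ⟨_, ⟨T, σ, hT, hσ, rfl⟩, rfl⟩,
    ⟨p, ⟨hp₁, hσp.symm⟩, rfl⟩, ⟨q, ⟨hq₁, hσq.symm⟩, rfl⟩⟩

theorem three_le_ncard_commonNeighbors_inP (β : NPoint) (x : Edge) (hxy : x ≠ β.1.1)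
    (hxv : β.1.2 ∈ perp {x}) :
    3 ≤ {γ : BPoint | BG.Adj γ (inP x) ∧ BG.Adj γ (inS β)}.ncard := by
  obtain ⟨⟨y, v⟩, hyv⟩ := β
  set T := perp (perp {x, y})
  have hT := isFactor_or_isCompleteTriad_perp_perp_pair hxy
  have hxT : x ∈ T := subset_perp_perp _ (by simp)
  have hyT : y ∈ T := subset_perp_perp _ (by simp)
  have hperpT : perp T = perp {x, y} := perp_perp_perp _
  have hvT : v ∈ perp T := by
    rw [hperpT, mem_perp_insert, mem_perp_singleton_s12]
    exact ⟨mem_perp_singleton_s12.1 hxv, hyv⟩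
  have hcard : (perp T).ncard = 3 := by
    rw [hperpT]
    exact ncard_eq_three_of_isFactor_or_isCompleteTriad
      (isFactor_or_isCompleteTriad_perp_pair hxy)
  obtain ⟨f, g, hf, hg, hfv, hgv, hfg⟩ := exists_ne_ne_of_ncard_eq_three hcard hvT
  refine (two_lt_ncard_iff (toFinite _)).2
    ⟨inP' v, inS ⟨(x, f), hf x hxT⟩, inS ⟨(x, g), hg x hxT⟩,
    ⟨(adj_inP_inP' ⟨(x, v), hvT x hxT⟩).symm, adj_inP'_inS ⟨(y, v), hyv⟩⟩,
    ⟨(adj_inP_inS _).symm, adj_inS_inS hT hcard hxT hyT hf hvT hxy hfv⟩,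
    ⟨(adj_inP_inS _).symm, adj_inS_inS hT hcard hxT hyT hg hvT hxy hgv⟩,
    nofun, nofun, inS_injective.ne fun h => hfg (congrArg (·.1.2) h)⟩

theorem three_le_ncard_commonNeighbors_inP' (β : NPoint) (u : Edge) (huv : u ≠ β.1.2)
    (hyu : u ∈ perp {β.1.1}) :
    3 ≤ {γ : BPoint | BG.Adj γ (inP' u) ∧ BG.Adj γ (inS β)}.ncard := by
  obtain ⟨⟨y, v⟩, hyv⟩ := β
  set T := perp {u, v}
  have hT := isFactor_or_isCompleteTriad_perp_pair huv
  have hyT : y ∈ T := by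
    rw [mem_perp_insert]
    exact ⟨mem_perp_singleton_s12.1 (mem_perp_singleton_comm.1 hyu),
      mem_perp_singleton_comm.1 (mem_perp_singleton_s12.2 hyv)⟩
  have huT : u ∈ perp T := subset_perp_perp _ (by simp)
  have hvT : v ∈ perp T := subset_perp_perp _ (by simp)
  have hcard : (perp T).ncard = 3 :=
    ncard_eq_three_of_isFactor_or_isCompleteTriad
      (isFactor_or_isCompleteTriad_perp_perp_pair huv)
  obtain ⟨t₁, t₂, ht₁, ht₂, ht₁y, ht₂y, ht₁₂⟩ :=
    exists_ne_ne_of_ncard_eq_three (ncard_eq_three_of_isFactor_or_isCompleteTriad hT) hyT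
  refine (two_lt_ncard_iff (toFinite _)).2
    ⟨inP y, inS ⟨(t₁, u), huT t₁ ht₁⟩, inS ⟨(t₂, u), huT t₂ ht₂⟩,
    ⟨adj_inP_inP' ⟨(y, u), huT y hyT⟩, adj_inP_inS ⟨(y, v), hyv⟩⟩,
    ⟨(adj_inP'_inS _).symm, adj_inS_inS hT hcard ht₁ hyT huT hvT ht₁y huv⟩,
    ⟨(adj_inP'_inS _).symm, adj_inS_inS hT hcard ht₂ hyT huT hvT ht₂y huv⟩,
    nofun, nofun, inS_injective.ne fun h => ht₁₂ (congrArg (·.1.1) h)⟩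

/-- Let `β = (y,v) ∈ 𝓟`. (a) If `x ∈ P` with `x ≠ y` and `v ∈ x^⊥`, then
`|{x,β}^⊥| ≥ 3` in 𝕊. (b) If `u' ∈ P'` with `u ≠ v` and `u ∈ y^⊥`, then `|{u',β}^⊥| ≥ 3`
in 𝕊. -/
theorem statement12 (β : NPoint) :
    (∀ x : Edge, x ≠ β.1.1 → β.1.2 ∈ perp {x} →
      3 ≤ {γ : BPoint | BG.Adj γ (inP x) ∧ BG.Adj γ (inS β)}.ncard) ∧
    (∀ u : Edge, u ≠ β.1.2 → u ∈ perp {β.1.1} →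
      3 ≤ {γ : BPoint | BG.Adj γ (inP' u) ∧ BG.Adj γ (inS β)}.ncard) :=
  ⟨three_le_ncard_commonNeighbors_inP β, three_le_ncard_commonNeighbors_inP' β⟩
end
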